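/- arXiv:2302.08551 — 6 statements merged into one kernel-verified Lean document; each statement's English description precedes it below -/
import Mathlib

section
/- Let P and Q be probability measures on a measurable space (A, 𝒜) with Q absolutely continuous with respect to P, let γ > 0, and let f, f̂ : A → [0,1] be measurable functions such that the square of (dQ/dP − 1) is P-integrable. Then ∫ f dP − ∫ f dQ − (γ/4)·∫ (f̂(a) − f(a))² dP(a) ≤ ∫ f̂ dP − ∫ f̂ dQ + (1/γ)·∫ (dQ/dP(a) − 1)² dP(a). -/
open MeasureTheory

/-- Chi-square divergence bound (Lemma from Zhu et al.): for probability measures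
`Q ≪ P`, any `γ > 0` and measurable `f, f̂ : A → [0,1]` with `(dQ/dP − 1)²`
`P`-integrable,
`∫ f dP − ∫ f dQ − (γ/4)·∫ (f̂ − f)² dP ≤ ∫ f̂ dP − ∫ f̂ dQ + (1/γ)·∫ (dQ/dP − 1)² dP`. -/
theorem stmt_0 {A : Type*} [MeasurableSpace A]
    (P Q : Measure A) [IsProbabilityMeasure P] [IsProbabilityMeasure Q]
    (hQP : Q ≪ P) (γ : ℝ) (hγ : 0 < γ)
    (f fhat : A → ℝ) (hf : Measurable f) (hfhat : Measurable fhat)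
    (hf01 : ∀ a, f a ∈ Set.Icc (0 : ℝ) 1)
    (hfhat01 : ∀ a, fhat a ∈ Set.Icc (0 : ℝ) 1)
    (hint : Integrable (fun a => ((Q.rnDeriv P a).toReal - 1) ^ 2) P) :
    ∫ a, f a ∂P - ∫ a, f a ∂Q - (γ / 4) * ∫ a, (fhat a - f a) ^ 2 ∂P
      ≤ ∫ a, fhat a ∂P - ∫ a, fhat a ∂Q
        + (1 / γ) * ∫ a, ((Q.rnDeriv P a).toReal - 1) ^ 2 ∂P := by
  set r : A → ℝ := fun a => (Q.rnDeriv P a).toReal with hr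
  set g : A → ℝ := fun a => f a - fhat a with hg
  have hrmeas : Measurable r := (Measure.measurable_rnDeriv Q P).ennreal_toReal
  have hgmeas : Measurable g := hf.sub hfhat
  have hgbd : ∀ a, |g a| ≤ 1 := by
    intro a
    have h1 := hf01 a; have h2 := hfhat01 a
    simp only [Set.mem_Icc] at h1 h2
    rw [abs_le]; constructor <;> simp only [hg] <;> linarith
  -- integrability facts
  have hfi : Integrable f P :=
    Integrable.mono' (integrable_const 1) hf.aestronglyMeasurable
      (Filter.Eventually.of_forall fun a => by
        have := hf01 a; simp only [Set.mem_Icc] at this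
        rw [Real.norm_eq_abs, abs_le]; constructor <;> linarith)
  have hfhi : Integrable fhat P :=
    Integrable.mono' (integrable_const 1) hfhat.aestronglyMeasurable
      (Filter.Eventually.of_forall fun a => by
        have := hfhat01 a; simp only [Set.mem_Icc] at this
        rw [Real.norm_eq_abs, abs_le]; constructor <;> linarith)
  have hgi : Integrable g P := hfi.sub hfhi
  have hg2i : Integrable (fun a => g a ^ 2) P :=
    Integrable.mono' (integrable_const 1) (hgmeas.pow_const 2).aestronglyMeasurable
      (Filter.Eventually.of_forall fun a => by
        have h1 := hgbd a
        rw [Real.norm_eq_abs, abs_of_nonneg (sq_nonneg _)]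
        nlinarith [abs_nonneg (g a), sq_abs (g a)])
  have hgri : Integrable (fun a => g a * (1 - r a)) P := by
    refine Integrable.mono' (hint.add (integrable_const 1))
      (hgmeas.mul ((measurable_const.sub hrmeas))).aestronglyMeasurable
      (Filter.Eventually.of_forall fun a => ?_)
    have h1 := hgbd a
    rw [Real.norm_eq_abs]
    have h2 : |g a * (1 - r a)| ≤ |1 - r a| := by
      rw [abs_mul]
      calc |g a| * |1 - r a| ≤ 1 * |1 - r a| :=
        mul_le_mul_of_nonneg_right h1 (abs_nonneg _)
      _ = |1 - r a| := one_mul _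
    refine h2.trans ?_
    show |1 - r a| ≤ (r a - 1) ^ 2 + 1
    nlinarith [sq_nonneg (|1 - r a| - 1), sq_abs (1 - r a), abs_nonneg (1 - r a)]
  -- key: ∫ g dQ = ∫ r * g dP
  have hQint : ∫ a, g a ∂Q = ∫ a, r a * g a ∂P := by
    rw [← MeasureTheory.integral_rnDeriv_smul hQP (f := g)]
    simp [smul_eq_mul, hr]
  -- pointwise inequality
  have hpt : ∀ a, g a * (1 - r a) ≤ (γ / 4) * g a ^ 2 + (1 / γ) * (r a - 1) ^ 2 := by
    intro a
    have key : (γ / 4) * g a ^ 2 + (1 / γ) * (r a - 1) ^ 2 - g a * (1 - r a)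
        = (γ * g a - 2 * (1 - r a)) ^ 2 / (4 * γ) := by
      field_simp; ring
    have hpos : (0:ℝ) ≤ (γ * g a - 2 * (1 - r a)) ^ 2 / (4 * γ) :=
      div_nonneg (sq_nonneg _) (by linarith)
    linarith
  have hmono : ∫ a, g a * (1 - r a) ∂P
      ≤ ∫ a, ((γ / 4) * g a ^ 2 + (1 / γ) * (r a - 1) ^ 2) ∂P := by
    refine integral_mono hgri ?_ hpt
    exact (hg2i.const_mul _).add (hint.const_mul _)
  have hsplit : ∫ a, ((γ / 4) * g a ^ 2 + (1 / γ) * (r a - 1) ^ 2) ∂P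
      = (γ / 4) * ∫ a, g a ^ 2 ∂P + (1 / γ) * ∫ a, (r a - 1) ^ 2 ∂P := by
    rw [integral_add (hg2i.const_mul _) (hint.const_mul _), integral_const_mul,
      integral_const_mul]
  have h1 : Integrable (fun a => r a * g a) P := by
    have heq2 : (fun a => r a * g a) = fun a => g a - g a * (1 - r a) := by
      funext a; ring
    rw [heq2]; exact hgi.sub hgri
  have hlin : ∫ a, g a * (1 - r a) ∂P = ∫ a, g a ∂P - ∫ a, r a * g a ∂P := by
    have heq : (fun a => g a * (1 - r a)) = fun a => g a - r a * g a := by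
      funext a; ring
    rw [heq, integral_sub hgi h1]
  have hgP : ∫ a, g a ∂P = ∫ a, f a ∂P - ∫ a, fhat a ∂P := integral_sub hfi hfhi
  have hgQ : ∫ a, g a ∂Q = ∫ a, f a ∂Q - ∫ a, fhat a ∂Q := by
    have hfQ : Integrable f Q :=
      Integrable.mono' (integrable_const 1) hf.aestronglyMeasurable
        (Filter.Eventually.of_forall fun a => by
          have := hf01 a; simp only [Set.mem_Icc] at this
          rw [Real.norm_eq_abs, abs_le]; constructor <;> linarith)
    have hfhQ : Integrable fhat Q :=
      Integrable.mono' (integrable_const 1) hfhat.aestronglyMeasurable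
        (Filter.Eventually.of_forall fun a => by
          have := hfhat01 a; simp only [Set.mem_Icc] at this
          rw [Real.norm_eq_abs, abs_le]; constructor <;> linarith)
    exact integral_sub hfQ hfhQ
  have hg2eq : ∫ a, g a ^ 2 ∂P = ∫ a, (fhat a - f a) ^ 2 ∂P := by
    congr 1; funext a; simp only [hg]; ring
  have hfin := hmono
  rw [hlin, ← hQint, hsplit, hgP, hgQ, hg2eq] at hfin
  linarith
end

section
/- Let (A, 𝒜) be a measurable space with probability measure μ, let γ > 0, β ∈ ℝ, and let f̂ : A → [0,1] be measurable. Let P and Q be probability measures on A with densities p = dP/dμ and q = dQ/dμ with respect to μ, where p > 0 μ-almost everywhere and ∫ q²/p dμ < ∞. Then ∫ f̂ dP − ∫ f̂ dQ + (1/γ)·∫ p·(q/p − 1)² dμ = ∫ p(a)·max(0, f̂(a) − β) dμ(a) + (1/γ)·∫ q(a)·( q(a)/p(a) − γ·max(0, f̂(a) − β) ) dμ(a) + ∫ (p(a) − q(a))·min(0, f̂(a) − β) dμ(a) − 1/γ. -/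
/-!
Splitting `f̂ = β + (f̂ - β)₊ + min 0 (f̂ - β)` and expanding `p (q/p - 1)² = q²/p - 2q + p`
(valid where `p > 0`), both sides become the same linear combination of `∫ q²/p dμ` and the
integrals of `p` and `q` against the two truncations; the constants cancel because
`∫ p dμ = ∫ q dμ = 1`.
-/

open MeasureTheory

theorem abs_max_zero_le_abs (x : ℝ) : |max 0 x| ≤ |x| := by
  rcases le_total 0 x with h | h <;> simp [h]

theorem abs_min_zero_le_abs (x : ℝ) : |min 0 x| ≤ |x| := by
  rcases le_total 0 x with h | h <;> simp [h]

namespace MeasureTheory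

variable {A : Type*} [MeasurableSpace A] {μ : Measure A}

theorem integral_withDensity_ofReal {p : A → ℝ} (hp : Measurable p) (hp0 : 0 ≤ᵐ[μ] p)
    (g : A → ℝ) :
    ∫ a, g a ∂μ.withDensity (fun a => ENNReal.ofReal (p a)) = ∫ a, p a * g a ∂μ := by
  rw [integral_withDensity_eq_integral_toReal_smul hp.ennreal_ofReal
    (ae_of_all _ fun _ => ENNReal.ofReal_lt_top)]
  refine integral_congr_ae ?_
  filter_upwards [hp0] with a ha
  rw [ENNReal.toReal_ofReal ha, smul_eq_mul]

section ProbabilityDensity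

variable {p : A → ℝ} [IsProbabilityMeasure (μ.withDensity fun a => ENNReal.ofReal (p a))]

theorem lintegral_ofReal_eq_one_of_isProbabilityMeasure_withDensity :
    ∫⁻ a, ENNReal.ofReal (p a) ∂μ = 1 := by
  have h := measure_univ (μ := μ.withDensity fun a => ENNReal.ofReal (p a))
  rwa [withDensity_apply _ MeasurableSet.univ, setLIntegral_univ] at h

theorem integrable_of_isProbabilityMeasure_withDensity (hp : AEStronglyMeasurable p μ)
    (hp0 : 0 ≤ᵐ[μ] p) : Integrable p μ := by
  rw [← lintegral_ofReal_ne_top_iff_integrable hp hp0,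
    lintegral_ofReal_eq_one_of_isProbabilityMeasure_withDensity]
  exact ENNReal.one_ne_top

theorem integral_eq_one_of_isProbabilityMeasure_withDensity (hp : AEStronglyMeasurable p μ)
    (hp0 : 0 ≤ᵐ[μ] p) : ∫ a, p a ∂μ = 1 := by
  rw [integral_eq_lintegral_of_nonneg_ae hp0 hp,
    lintegral_ofReal_eq_one_of_isProbabilityMeasure_withDensity, ENNReal.toReal_one]

end ProbabilityDensity

section Truncation

variable {r g : A → ℝ} {C : ℝ}

theorem Integrable.mul_max_zero_sub (hr : Integrable r μ) (hg : AEStronglyMeasurable g μ)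
    (hgC : ∀ᵐ a ∂μ, |g a| ≤ C) (β : ℝ) :
    Integrable (fun a => r a * max 0 (g a - β)) μ :=
  hr.mul_bdd (c := C + |β|) (by fun_prop) <| hgC.mono fun a ha =>
    (abs_max_zero_le_abs _).trans <| (abs_sub _ _).trans <| by gcongr

theorem Integrable.mul_min_zero_sub (hr : Integrable r μ) (hg : AEStronglyMeasurable g μ)
    (hgC : ∀ᵐ a ∂μ, |g a| ≤ C) (β : ℝ) :
    Integrable (fun a => r a * min 0 (g a - β)) μ :=
  hr.mul_bdd (c := C + |β|) (by fun_prop) <| hgC.mono fun a ha =>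
    (abs_min_zero_le_abs _).trans <| (abs_sub _ _).trans <| by gcongr

theorem integral_mul_eq_add_max_zero_sub_add_min_zero_sub (hr : Integrable r μ)
    (hg : AEStronglyMeasurable g μ) (hgC : ∀ᵐ a ∂μ, |g a| ≤ C) (β : ℝ) :
    ∫ a, r a * g a ∂μ = β * ∫ a, r a ∂μ + ∫ a, r a * max 0 (g a - β) ∂μ
      + ∫ a, r a * min 0 (g a - β) ∂μ := by
  have hsplit : ∀ a, r a * g a = β * r a + r a * max 0 (g a - β) + r a * min 0 (g a - β) :=
    fun a => by linear_combination r a * (max_add_min 0 (g a - β)).symm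
  simp_rw [hsplit]
  rw [integral_add ?_ (hr.mul_min_zero_sub hg hgC β),
    integral_add (hr.const_mul β) (hr.mul_max_zero_sub hg hgC β), integral_const_mul]
  exact (hr.const_mul β).add (hr.mul_max_zero_sub hg hgC β)

end Truncation

theorem integral_mul_div_sub_one_sq {p q : A → ℝ} (hp0 : ∀ᵐ a ∂μ, p a ≠ 0)
    (hp : Integrable p μ) (hq : Integrable q μ) (hqp : Integrable (fun a => q a ^ 2 / p a) μ) :
    ∫ a, p a * (q a / p a - 1) ^ 2 ∂μ
      = ∫ a, q a ^ 2 / p a ∂μ - 2 * ∫ a, q a ∂μ + ∫ a, p a ∂μ := by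
  have hexpand : (fun a => p a * (q a / p a - 1) ^ 2) =ᵐ[μ]
      fun a => q a ^ 2 / p a - 2 * q a + p a := by
    filter_upwards [hp0] with a ha
    field_simp
    ring
  rw [integral_congr_ae hexpand, integral_add ?_ hp, integral_sub hqp (hq.const_mul 2),
    integral_const_mul]
  exact hqp.sub (hq.const_mul 2)

end MeasureTheory

theorem stmt_1_general {A : Type*} [MeasurableSpace A]
    (μ : Measure A)
    (γ : ℝ) (hγ : 0 < γ) (β : ℝ)
    (fhat : A → ℝ) (hfhat : Measurable fhat)
    (hfhat01 : ∀ a, fhat a ∈ Set.Icc (0 : ℝ) 1)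
    (p q : A → ℝ) (hp : Measurable p) (hq : Measurable q)
    (hp0 : ∀ a, 0 ≤ p a) (hq0 : ∀ a, 0 ≤ q a)
    (hppos : ∀ᵐ a ∂μ, 0 < p a)
    (hint : Integrable (fun a => (q a) ^ 2 / p a) μ)
    (P Q : Measure A) [IsProbabilityMeasure P] [IsProbabilityMeasure Q]
    (hP : P = μ.withDensity (fun a => ENNReal.ofReal (p a)))
    (hQ : Q = μ.withDensity (fun a => ENNReal.ofReal (q a))) :
    ∫ a, fhat a ∂P - ∫ a, fhat a ∂Q
        + (1 / γ) * ∫ a, p a * (q a / p a - 1) ^ 2 ∂μ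
      = ∫ a, p a * max 0 (fhat a - β) ∂μ
        + (1 / γ) * ∫ a, q a * (q a / p a - γ * max 0 (fhat a - β)) ∂μ
        + ∫ a, (p a - q a) * min 0 (fhat a - β) ∂μ
        - 1 / γ := by
  subst hP hQ
  have hp0' : 0 ≤ᵐ[μ] p := ae_of_all _ hp0
  have hq0' : 0 ≤ᵐ[μ] q := ae_of_all _ hq0
  have hpm := hp.aestronglyMeasurable (μ := μ)
  have hqm := hq.aestronglyMeasurable (μ := μ)
  have hIp := integrable_of_isProbabilityMeasure_withDensity hpm hp0'
  have hIq := integrable_of_isProbabilityMeasure_withDensity hqm hq0'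
  have hf := hfhat.aestronglyMeasurable (μ := μ)
  have hfC : ∀ᵐ a ∂μ, |fhat a| ≤ 1 :=
    ae_of_all _ fun a => abs_le.mpr ⟨by linarith [(hfhat01 a).1], (hfhat01 a).2⟩
  have hsecond : ∫ a, q a * (q a / p a - γ * max 0 (fhat a - β)) ∂μ
      = ∫ a, q a ^ 2 / p a ∂μ - γ * ∫ a, q a * max 0 (fhat a - β) ∂μ := by
    simp_rw [show ∀ a, q a * (q a / p a - γ * max 0 (fhat a - β))
        = q a ^ 2 / p a - γ * (q a * max 0 (fhat a - β)) from fun a => by ring]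
    rw [integral_sub hint ((hIq.mul_max_zero_sub hf hfC β).const_mul γ), integral_const_mul]
  simp_rw [sub_mul]
  rw [integral_withDensity_ofReal hp hp0', integral_withDensity_ofReal hq hq0',
    integral_mul_eq_add_max_zero_sub_add_min_zero_sub hIp hf hfC β,
    integral_mul_eq_add_max_zero_sub_add_min_zero_sub hIq hf hfC β,
    integral_mul_div_sub_one_sq (hppos.mono fun _ h => h.ne') hIp hIq hint, hsecond,
    integral_sub (hIp.mul_min_zero_sub hf hfC β) (hIq.mul_min_zero_sub hf hfC β),
    integral_eq_one_of_isProbabilityMeasure_withDensity hpm hp0',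
    integral_eq_one_of_isProbabilityMeasure_withDensity hqm hq0']
  field_simp
  ring

/-- Decomposition of the chi-square upper bound relative to a benchmark level `β`:
with `P = p·μ`, `Q = q·μ`, `p > 0` μ-a.e. and `∫ q²/p dμ < ∞`,
`∫ f̂ dP − ∫ f̂ dQ + (1/γ)∫ p (q/p − 1)² dμ
  = ∫ p·(f̂ − β)₊ dμ + (1/γ)∫ q·(q/p − γ(f̂ − β)₊) dμ + ∫ (p − q)·min(0, f̂ − β) dμ − 1/γ`. -/
theorem stmt_1 {A : Type*} [MeasurableSpace A]
    (μ : Measure A) [IsProbabilityMeasure μ]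
    (γ : ℝ) (hγ : 0 < γ) (β : ℝ)
    (fhat : A → ℝ) (hfhat : Measurable fhat)
    (hfhat01 : ∀ a, fhat a ∈ Set.Icc (0 : ℝ) 1)
    (p q : A → ℝ) (hp : Measurable p) (hq : Measurable q)
    (hp0 : ∀ a, 0 ≤ p a) (hq0 : ∀ a, 0 ≤ q a)
    (hppos : ∀ᵐ a ∂μ, 0 < p a)
    (hint : Integrable (fun a => (q a) ^ 2 / p a) μ)
    (P Q : Measure A) [IsProbabilityMeasure P] [IsProbabilityMeasure Q]
    (hP : P = μ.withDensity (fun a => ENNReal.ofReal (p a)))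
    (hQ : Q = μ.withDensity (fun a => ENNReal.ofReal (q a))) :
    ∫ a, fhat a ∂P - ∫ a, fhat a ∂Q
        + (1 / γ) * ∫ a, p a * (q a / p a - 1) ^ 2 ∂μ
      = ∫ a, p a * max 0 (fhat a - β) ∂μ
        + (1 / γ) * ∫ a, q a * (q a / p a - γ * max 0 (fhat a - β)) ∂μ
        + ∫ a, (p a - q a) * min 0 (fhat a - β) ∂μ
        - 1 / γ :=
  stmt_1_general μ γ hγ β fhat hfhat hfhat01 p q hp hq hp0 hq0 hppos hint P Q hP hQ
end

section
/- Let (A, 𝒜) be a measurable space with probability measure μ, let τ ≥ 1, γ > 0, κ ≥ 1, β ∈ ℝ, and let f̂ : A → [0,1] be measurable. Define p(a) := κτ / (1 + γ·max(0, f̂(a) − β)). Let Q be a probability measure on A with density q = dQ/dμ satisfying q(a) ≤ τ for μ-almost every a. Then (1/γ)·∫ ( q(a)/p(a) − γ·max(0, f̂(a) − β) ) dQ(a) ≤ 1/γ. -/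
open MeasureTheory

/-- With `p(a) = κτ / (1 + γ·(f̂(a) − β)₊)`, `κ ≥ 1`, and `Q = q·μ` a probability
measure with `q ≤ τ` μ-a.e.,
`(1/γ)·∫ ( q(a)/p(a) − γ·(f̂(a) − β)₊ ) dQ(a) ≤ 1/γ`. -/
theorem stmt_3 {A : Type*} [MeasurableSpace A]
    (μ : Measure A) [IsProbabilityMeasure μ]
    (τ γ κ β : ℝ) (hτ : 1 ≤ τ) (hγ : 0 < γ) (hκ : 1 ≤ κ)
    (fhat : A → ℝ) (hfhat : Measurable fhat)
    (hfhat01 : ∀ a, fhat a ∈ Set.Icc (0 : ℝ) 1)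
    (q : A → ℝ) (hq : Measurable q) (hq0 : ∀ a, 0 ≤ q a)
    (hqτ : ∀ᵐ a ∂μ, q a ≤ τ)
    (Q : Measure A) [IsProbabilityMeasure Q]
    (hQ : Q = μ.withDensity (fun a => ENNReal.ofReal (q a))) :
    (1 / γ) * ∫ a, (q a / (κ * τ / (1 + γ * max 0 (fhat a - β)))
        - γ * max 0 (fhat a - β)) ∂Q
      ≤ 1 / γ := by
  have hac : Q ≪ μ := by
    rw [hQ]; exact withDensity_absolutelyContinuous _ _
  have hqτQ : ∀ᵐ a ∂Q, q a ≤ τ := hac.ae_le hqτ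
  have hbound : ∀ᵐ a ∂Q, (q a / (κ * τ / (1 + γ * max 0 (fhat a - β)))
      - γ * max 0 (fhat a - β)) ≤ 1 := by
    filter_upwards [hqτQ] with a ha
    set m := max 0 (fhat a - β) with hmdef
    have hm : 0 ≤ m := le_max_left _ _
    have h1 : 0 < 1 + γ * m := by positivity
    have hκτ : 0 < κ * τ := by nlinarith
    rw [div_div_eq_mul_div]
    have hdiv : q a * (1 + γ * m) / (κ * τ) ≤ 1 + γ * m := by
      rw [div_le_iff₀ hκτ]
      nlinarith [mul_nonneg (sub_nonneg.2 ha) h1.le,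
        mul_nonneg (mul_nonneg (sub_nonneg.2 hκ) (by linarith : (0:ℝ) ≤ τ)) h1.le]
    linarith
  have hInt : ∫ a, (q a / (κ * τ / (1 + γ * max 0 (fhat a - β)))
      - γ * max 0 (fhat a - β)) ∂Q ≤ 1 := by
    by_cases hint : Integrable (fun a => q a / (κ * τ / (1 + γ * max 0 (fhat a - β)))
        - γ * max 0 (fhat a - β)) Q
    · calc _ ≤ ∫ _ : A, (1 : ℝ) ∂Q := integral_mono_ae hint (integrable_const 1) hbound
        _ = 1 := by simp
    · rw [integral_undef hint]; norm_num
  have h1γ : 0 ≤ 1 / γ := by positivity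
  calc (1 / γ) * _ ≤ (1 / γ) * 1 := by
        exact mul_le_mul_of_nonneg_left hInt h1γ
    _ = 1 / γ := mul_one _
end

section
/- Let (A, 𝒜) be a measurable space with probability measure μ, let τ ≥ 1, γ > 0, κ ≥ 1, β ∈ ℝ, and let f̂ : A → [0,1] be measurable. Let P be the probability measure with density dP/dμ(a) = κτ / (1 + γ·max(0, f̂(a) − β)) (assume κ is such that this density integrates to 1 with respect to μ). Let Q be any probability measure with Q ≪ μ and dQ/dμ ≤ τ μ-almost everywhere. Then for every measurable f : A → [0,1], ∫ f dP − ∫ f dQ − (γ/4)·∫ (f̂(a) − f(a))² dP(a) ≤ κτ/γ. -/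
/-!
Write `p` and `q` for the densities of `P` and `Q` with respect to `μ`. Because `P` and `Q`
are both probability measures, the loss `f` may be recentred at `β` for free, and the left-hand
side becomes `∫ (p (f - β - γ/4 (f̂ - f)²) - q (f - β)) dμ`. The integrand is at most `κτ/γ` at
every point: where `f ≥ β` drop `q` and use AM-GM on `-(f̂ - f) - γ/4 (f̂ - f)²`; where `f < β`
use `q ≤ κτ`, and the surplus `κτ - p = γ (f̂ - β)₊ p` is absorbed by the quadratic term.
-/

open MeasureTheory

theorem capped_igw_pointwise_le {γ c β y ŷ q : ℝ} (hγ : 0 < γ) (hc : 0 ≤ c) (hq : 0 ≤ q)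
    (hqc : q ≤ c) :
    c / (1 + γ * max 0 (ŷ - β)) * (y - β - γ / 4 * (ŷ - y) ^ 2) - q * (y - β) ≤ c / γ := by
  have hm : 0 ≤ max 0 (ŷ - β) := le_max_left _ _
  have hmβ : ŷ - β ≤ max 0 (ŷ - β) := le_max_right _ _
  have hm_sq : max 0 (ŷ - β) * (ŷ - β) = max 0 (ŷ - β) ^ 2 := by
    rcases max_cases 0 (ŷ - β) with ⟨h, -⟩ | ⟨h, -⟩ <;> rw [h] <;> ring
  generalize max 0 (ŷ - β) = m at *
  have hp : 0 ≤ c / (1 + γ * m) := by positivity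
  have hpc : c / (1 + γ * m) * (1 + γ * m) = c := div_mul_cancel₀ _ (by positivity)
  generalize c / (1 + γ * m) = p at *
  have hcγ : 0 ≤ c / γ := by positivity
  rcases le_total β y with hy | hy
  · calc _ ≤ p * (m - (ŷ - y) - γ / 4 * (ŷ - y) ^ 2) := by nlinarith
      _ = c / γ - p * γ / 4 * (ŷ - y + 2 / γ) ^ 2 := by
        field_simp
        linear_combination 4 * hpc
      _ ≤ c / γ := by
        have : 0 ≤ p * γ / 4 * (ŷ - y + 2 / γ) ^ 2 := by positivity
        linarith
  · calc _ ≤ (β - y) * (c - p) - γ / 4 * (ŷ - y) ^ 2 * p := by nlinarith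
      _ = -(γ * p * ((ŷ - y) / 2 - m) ^ 2) := by
        linear_combination (y - β) * hpc - γ * p * hm_sq
      _ ≤ c / γ := by
        have : 0 ≤ γ * p * ((ŷ - y) / 2 - m) ^ 2 := by positivity
        linarith

theorem integral_sub_integral_le_of_ae_rnDeriv_le {A : Type*} [MeasurableSpace A]
    {μ P Q : Measure A} [IsProbabilityMeasure μ] [SigmaFinite P] [SigmaFinite Q]
    (hPμ : P ≪ μ) (hQμ : Q ≪ μ) {g h : A → ℝ} (hg : Integrable g P) (hh : Integrable h Q)
    {C : ℝ} (hC : ∀ᵐ a ∂μ, (P.rnDeriv μ a).toReal * g a - (Q.rnDeriv μ a).toReal * h a ≤ C) :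
    ∫ a, g a ∂P - ∫ a, h a ∂Q ≤ C := by
  have hg' := (integrable_toReal_rnDeriv_mul_iff hPμ).2 hg
  have hh' := (integrable_toReal_rnDeriv_mul_iff hQμ).2 hh
  rw [← integral_toReal_rnDeriv_mul hPμ, ← integral_toReal_rnDeriv_mul hQμ, ← integral_sub hg' hh']
  calc _ ≤ ∫ _, C ∂μ := integral_mono_ae (hg'.sub hh') (integrable_const C) hC
    _ = C := by simp

/-- Bound on the Decision-Estimation Coefficient for the CappedIGW sampling
distribution `P` with density `κτ / (1 + γ·(f̂(a) − β)₊)` w.r.t. `μ`: for any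
τ-smooth competitor `Q` (i.e. `Q ≪ μ` with `dQ/dμ ≤ τ` μ-a.e.) and any
measurable `f : A → [0,1]`,
`∫ f dP − ∫ f dQ − (γ/4)·∫ (f̂ − f)² dP ≤ κτ/γ`. -/
theorem stmt_5 {A : Type*} [MeasurableSpace A]
    (μ : Measure A) [IsProbabilityMeasure μ]
    (τ γ κ β : ℝ) (hτ : 1 ≤ τ) (hγ : 0 < γ) (hκ : 1 ≤ κ)
    (fhat : A → ℝ) (hfhat : Measurable fhat)
    (hfhat01 : ∀ a, fhat a ∈ Set.Icc (0 : ℝ) 1)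
    (P : Measure A)
    (hP : P = μ.withDensity
      (fun a => ENNReal.ofReal (κ * τ / (1 + γ * max 0 (fhat a - β)))))
    (hPprob : IsProbabilityMeasure P)
    (Q : Measure A) [IsProbabilityMeasure Q] (hQμ : Q ≪ μ)
    (hQτ : ∀ᵐ a ∂μ, (Q.rnDeriv μ a).toReal ≤ τ)
    (f : A → ℝ) (hf : Measurable f) (hf01 : ∀ a, f a ∈ Set.Icc (0 : ℝ) 1) :
    ∫ a, f a ∂P - ∫ a, f a ∂Q - (γ / 4) * ∫ a, (fhat a - f a) ^ 2 ∂P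
      ≤ κ * τ / γ := by
  have := hPprob
  have hfP : Integrable f P := .of_mem_Icc 0 1 hf.aemeasurable (ae_of_all _ hf01)
  have hfQ : Integrable f Q := .of_mem_Icc 0 1 hf.aemeasurable (ae_of_all _ hf01)
  have hfβP : Integrable (fun a => f a - β) P := hfP.sub (integrable_const β)
  have hfβQ : Integrable (fun a => f a - β) Q := hfQ.sub (integrable_const β)
  have hsqP : Integrable (fun a => (fhat a - f a) ^ 2) P :=
    .of_mem_Icc 0 1 ((hfhat.sub hf).pow_const 2).aemeasurable <| ae_of_all _ fun a =>
      ⟨sq_nonneg _, by nlinarith [(hfhat01 a).1, (hfhat01 a).2, (hf01 a).1, (hf01 a).2]⟩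
  have hrecentre : ∫ a, f a ∂P - ∫ a, f a ∂Q - (γ / 4) * ∫ a, (fhat a - f a) ^ 2 ∂P =
      ∫ a, f a - β - γ / 4 * (fhat a - f a) ^ 2 ∂P - ∫ a, f a - β ∂Q := by
    rw [integral_sub hfβP (hsqP.const_mul _), integral_sub hfP (integrable_const β),
      integral_sub hfQ (integrable_const β), integral_const_mul]
    simp only [integral_const, probReal_univ, smul_eq_mul, one_mul]
    ring
  have hp : Measurable fun a => ENNReal.ofReal (κ * τ / (1 + γ * max 0 (fhat a - β))) := by
    fun_prop
  subst hP
  rw [hrecentre]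
  refine integral_sub_integral_le_of_ae_rnDeriv_le (withDensity_absolutelyContinuous _ _) hQμ
    (hfβP.sub (hsqP.const_mul _)) hfβQ ?_
  filter_upwards [Measure.rnDeriv_withDensity μ hp, hQτ] with a hPa hQa
  rw [hPa, ENNReal.toReal_ofReal (by positivity)]
  have hqc : (Q.rnDeriv μ a).toReal ≤ κ * τ :=
    hQa.trans (le_mul_of_one_le_left (by positivity) hκ)
  exact capped_igw_pointwise_le hγ (by positivity) ENNReal.toReal_nonneg hqc
end

section
/- Let (A, 𝒜) be a measurable space with probability measure μ, let τ ≥ 1, γ > 0, κ ≥ 1, β ∈ ℝ, and let f̂ : A → [0,1] be measurable. Let P be the probability measure with density dP/dμ(a) = κτ / (1 + γ·max(0, f̂(a) − β)) (assume κ is such that this density integrates to 1 with respect to μ). Let Q be any probability measure with Q ≪ μ and dQ/dμ ≤ τ μ-almost everywhere. Then for every measurable f : A → [0,1], ∫ f dP − ∫ f dQ ≤ κτ/γ + (γ/4)·∫ (f̂(a) − f(a))² dP(a). -/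
/-!
Since `P` and `Q` are both probability measures, the regret equals `∫ (f - β) (p - q) dμ`
with `p = dP/dμ`, `q = dQ/dμ`, and this integrand is bounded pointwise.
Where `f ≥ β`, drop `q` and use `f - β ≤ (f̂ - β)₊ + 1/γ + (γ/4)(f̂ - f)²`
together with `p ((f̂ - β)₊ + 1/γ) = κτ/γ`.
Where `f < β`, use `q ≤ τ ≤ κτ` and `κτ - p = γ (f̂ - β)₊ p`, and
`(f̂ - β)₊ (β - f) ≤ (f̂ - f)²/4` by AM-GM.
-/

open MeasureTheory

noncomputable def cappedIGWDensity (c γ β x : ℝ) : ℝ :=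
  c / (1 + γ * max 0 (x - β))

section Pointwise

variable {c γ β x : ℝ}

lemma one_add_mul_max_zero_pos (hγ : 0 ≤ γ) : 0 < 1 + γ * max 0 (x - β) := by
  have := mul_nonneg hγ (le_max_left 0 (x - β))
  linarith

lemma cappedIGWDensity_mul (hγ : 0 ≤ γ) :
    cappedIGWDensity c γ β x * (1 + γ * max 0 (x - β)) = c :=
  div_mul_cancel₀ c (one_add_mul_max_zero_pos hγ).ne'

lemma cappedIGWDensity_nonneg (hγ : 0 ≤ γ) (hc : 0 ≤ c) : 0 ≤ cappedIGWDensity c γ β x :=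
  div_nonneg hc (one_add_mul_max_zero_pos hγ).le

lemma measurable_cappedIGWDensity {A : Type*} [MeasurableSpace A] {g : A → ℝ}
    (hg : Measurable g) : Measurable fun a => cappedIGWDensity c γ β (g a) := by
  unfold cappedIGWDensity
  fun_prop

lemma sub_le_max_zero_add_inv_add_sq (hγ : 0 < γ) (f : ℝ) :
    f - β ≤ max 0 (x - β) + 1 / γ + γ / 4 * (x - f) ^ 2 := by
  have amgm : f - x ≤ 1 / γ + γ / 4 * (x - f) ^ 2 := by
    rw [div_add' _ _ _ hγ.ne', le_div_iff₀ hγ]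
    nlinarith [sq_nonneg (γ * (x - f) + 2)]
  linarith [le_max_right 0 (x - β)]

lemma max_zero_sub_mul_sub_le (f : ℝ) :
    max 0 (x - β) * (β - f) ≤ (x - f) ^ 2 / 4 := by
  rcases le_total (x - β) 0 with h | h
  · rw [max_eq_left h, zero_mul]; positivity
  · rw [max_eq_right h]; nlinarith [sq_nonneg (x - β - (β - f))]

theorem sub_mul_cappedIGWDensity_sub_le (hγ : 0 < γ) {q : ℝ} (hq0 : 0 ≤ q) (hqc : q ≤ c)
    (f : ℝ) :
    (f - β) * (cappedIGWDensity c γ β x - q)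
      ≤ c / γ + γ / 4 * (cappedIGWDensity c γ β x * (x - f) ^ 2) := by
  set p := cappedIGWDensity c γ β x
  set s := max 0 (x - β)
  have hp : p * (1 + γ * s) = c := cappedIGWDensity_mul hγ.le
  have hp0 : 0 ≤ p := cappedIGWDensity_nonneg hγ.le (hq0.trans hqc)
  rcases le_total β f with hβf | hfβ
  · have hcγ : p * (s + 1 / γ) = c / γ := by
      rw [← hp]; field_simp; ring
    calc (f - β) * (p - q) ≤ (f - β) * p := by nlinarith
      _ ≤ (s + 1 / γ + γ / 4 * (x - f) ^ 2) * p :=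
          mul_le_mul_of_nonneg_right (sub_le_max_zero_add_inv_add_sq hγ f) hp0
      _ = c / γ + γ / 4 * (p * (x - f) ^ 2) := by rw [← hcγ]; ring
  · have hc : 0 ≤ c / γ := div_nonneg (hq0.trans hqc) hγ.le
    have hsq : 0 ≤ γ / 4 * (p * (x - f) ^ 2) := by positivity
    calc (f - β) * (p - q) ≤ (β - f) * (c - p) := by nlinarith
      _ = γ * p * (s * (β - f)) := by rw [← hp]; ring
      _ ≤ γ * p * ((x - f) ^ 2 / 4) :=
          mul_le_mul_of_nonneg_left (max_zero_sub_mul_sub_le f) (by positivity)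
      _ ≤ c / γ + γ / 4 * (p * (x - f) ^ 2) := by linarith

end Pointwise

section RegretDecomposition

variable {A : Type*} [MeasurableSpace A] {μ P Q : Measure A} [SigmaFinite μ] {g : A → ℝ}

lemma integrable_rnDeriv_mul_sub_const [IsFiniteMeasure P] (hP : P ≪ μ) (hg : Integrable g P)
    (β : ℝ) : Integrable (fun a => (P.rnDeriv μ a).toReal * (g a - β)) μ :=
  (integrable_rnDeriv_smul_iff hP).2 (hg.sub (integrable_const β))

lemma integrable_sub_mul_rnDeriv_sub [IsFiniteMeasure P] [IsFiniteMeasure Q] (hP : P ≪ μ)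
    (hQ : Q ≪ μ) (hgP : Integrable g P) (hgQ : Integrable g Q) (β : ℝ) :
    Integrable (fun a => (g a - β) * ((P.rnDeriv μ a).toReal - (Q.rnDeriv μ a).toReal)) μ :=
  ((integrable_rnDeriv_mul_sub_const hP hgP β).sub
    (integrable_rnDeriv_mul_sub_const hQ hgQ β)).congr
    (Filter.Eventually.of_forall fun a => by simp only [Pi.sub_apply]; ring)

lemma integral_sub_integral_eq_integral_mul_rnDeriv_sub [IsProbabilityMeasure P]
    [IsProbabilityMeasure Q] (hP : P ≪ μ) (hQ : Q ≪ μ) (hgP : Integrable g P)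
    (hgQ : Integrable g Q) (β : ℝ) :
    ∫ a, g a ∂P - ∫ a, g a ∂Q
      = ∫ a, (g a - β) * ((P.rnDeriv μ a).toReal - (Q.rnDeriv μ a).toReal) ∂μ := by
  calc ∫ a, g a ∂P - ∫ a, g a ∂Q = ∫ a, (g a - β) ∂P - ∫ a, (g a - β) ∂Q := by
        rw [integral_sub hgP (integrable_const β), integral_sub hgQ (integrable_const β)]
        simp
    _ = ∫ a, (P.rnDeriv μ a).toReal * (g a - β) ∂μ
          - ∫ a, (Q.rnDeriv μ a).toReal * (g a - β) ∂μ := by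
        rw [← integral_rnDeriv_smul hP, ← integral_rnDeriv_smul hQ]
        rfl
    _ = _ := by
        rw [← integral_sub (integrable_rnDeriv_mul_sub_const hP hgP β)
          (integrable_rnDeriv_mul_sub_const hQ hgQ β)]
        congr 1 with a
        ring

end RegretDecomposition

/-- Bound on the Decision-Estimation Coefficient for the CappedIGW sampling
distribution `P` with density `κτ / (1 + γ·(f̂(a) − β)₊)` w.r.t. `μ`: for any
τ-smooth competitor `Q` (i.e. `Q ≪ μ` with `dQ/dμ ≤ τ` μ-a.e.) and any
measurable `f : A → [0,1]`,
`∫ f dP − ∫ f dQ ≤ κτ/γ + (γ/4)·∫ (f̂ − f)² dP`. -/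
theorem stmt_6 {A : Type*} [MeasurableSpace A]
    (μ : Measure A) [IsProbabilityMeasure μ]
    (τ γ κ β : ℝ) (hτ : 1 ≤ τ) (hγ : 0 < γ) (hκ : 1 ≤ κ)
    (fhat : A → ℝ) (hfhat : Measurable fhat)
    (hfhat01 : ∀ a, fhat a ∈ Set.Icc (0 : ℝ) 1)
    (P : Measure A)
    (hP : P = μ.withDensity
      (fun a => ENNReal.ofReal (κ * τ / (1 + γ * max 0 (fhat a - β)))))
    (hPprob : IsProbabilityMeasure P)
    (Q : Measure A) [IsProbabilityMeasure Q] (hQμ : Q ≪ μ)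
    (hQτ : ∀ᵐ a ∂μ, (Q.rnDeriv μ a).toReal ≤ τ)
    (f : A → ℝ) (hf : Measurable f) (hf01 : ∀ a, f a ∈ Set.Icc (0 : ℝ) 1) :
    ∫ a, f a ∂P - ∫ a, f a ∂Q
      ≤ κ * τ / γ + (γ / 4) * ∫ a, (fhat a - f a) ^ 2 ∂P := by
  have hPμ : P ≪ μ := hP ▸ withDensity_absolutelyContinuous _ _
  have hdP : ∀ᵐ a ∂μ, (P.rnDeriv μ a).toReal = cappedIGWDensity (κ * τ) γ β (fhat a) := by
    filter_upwards [hP ▸ Measure.rnDeriv_withDensity μ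
      (measurable_cappedIGWDensity hfhat).ennreal_ofReal] with a ha
    rw [ha, ENNReal.toReal_ofReal (cappedIGWDensity_nonneg hγ.le (by positivity))]
  have hf_int : ∀ ν : Measure A, [IsFiniteMeasure ν] → Integrable f ν := fun ν _ =>
    .of_mem_Icc 0 1 hf.aemeasurable (ae_of_all _ hf01)
  have hsq_int : Integrable (fun a => (fhat a - f a) ^ 2) P :=
    .of_mem_Icc 0 1 ((hfhat.sub hf).pow_const 2).aemeasurable (ae_of_all _ fun a => by
      obtain ⟨⟨h0, h1⟩, ⟨h0', h1'⟩⟩ := And.intro (hfhat01 a) (hf01 a)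
      exact ⟨sq_nonneg _, by nlinarith⟩)
  have hsq_μ : Integrable (fun a => (P.rnDeriv μ a).toReal * (fhat a - f a) ^ 2) μ :=
    (integrable_rnDeriv_smul_iff hPμ).2 hsq_int
  have hsq_eq : ∫ a, (P.rnDeriv μ a).toReal * (fhat a - f a) ^ 2 ∂μ
      = ∫ a, (fhat a - f a) ^ 2 ∂P :=
    integral_rnDeriv_smul hPμ
  have hτκ : τ ≤ κ * τ := by nlinarith
  calc ∫ a, f a ∂P - ∫ a, f a ∂Q
      = ∫ a, (f a - β) * ((P.rnDeriv μ a).toReal - (Q.rnDeriv μ a).toReal) ∂μ :=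
        integral_sub_integral_eq_integral_mul_rnDeriv_sub hPμ hQμ (hf_int P) (hf_int Q) β
    _ ≤ ∫ a, (κ * τ / γ + γ / 4 * ((P.rnDeriv μ a).toReal * (fhat a - f a) ^ 2)) ∂μ := by
        refine integral_mono_ae
          (integrable_sub_mul_rnDeriv_sub hPμ hQμ (hf_int P) (hf_int Q) β)
          ((integrable_const _).add (hsq_μ.const_mul _))
          ?_
        filter_upwards [hdP, hQτ] with a hpa hqa
        rw [hpa]
        exact sub_mul_cappedIGWDensity_sub_le hγ ENNReal.toReal_nonneg (hqa.trans hτκ) (f a)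
    _ = κ * τ / γ + γ / 4 * ∫ a, (fhat a - f a) ^ 2 ∂P := by
        rw [integral_add (integrable_const _) (hsq_μ.const_mul _), integral_const,
          integral_const_mul, hsq_eq]
        simp
end

section
/- Let (A, 𝒜) be a measurable space with probability measure μ, τ ≥ 1, γ > 0, and f̂ : A → [0,1] measurable. Define g(a; β) := τ / (1 + γ·max(0, f̂(a) − β)) and z(β) := ∫ g(a; β) dμ(a). Then there exists β ∈ [(1−τ)/γ, 1] such that z(β) = 1; that is, a ↦ g(a; β) is a probability density with respect to μ, so the normalization constant κ can be taken equal to 1. -/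
open MeasureTheory

/-- Exact normalization is attainable: with
`g(a; β) := τ / (1 + γ·(f̂(a) − β)₊)` and `z(β) := ∫ g(a; β) dμ(a)`, there exists
`β ∈ [(1−τ)/γ, 1]` with `z(β) = 1`, i.e. `a ↦ g(a; β)` is a probability density
w.r.t. `μ` (the normalization constant `κ` can be taken equal to `1`). -/
theorem stmt_14 {A : Type*} [MeasurableSpace A]
    (μ : Measure A) [IsProbabilityMeasure μ]
    (τ γ : ℝ) (hτ : 1 ≤ τ) (hγ : 0 < γ)
    (fhat : A → ℝ) (hfhat : Measurable fhat)
    (hfhat01 : ∀ a, fhat a ∈ Set.Icc (0 : ℝ) 1) :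
    ∃ β ∈ Set.Icc ((1 - τ) / γ) 1,
      ∫ a, τ / (1 + γ * max 0 (fhat a - β)) ∂μ = 1 := by
  set β₀ : ℝ := (1 - τ) / γ with hβ₀
  have hτ0 : (0:ℝ) < τ := lt_of_lt_of_le one_pos hτ
  set G : ℝ → A → ℝ := fun β a => τ / (1 + γ * max 0 (fhat a - β)) with hG
  have hden : ∀ β a, (1:ℝ) ≤ 1 + γ * max 0 (fhat a - β) := by
    intro β a
    nlinarith [le_max_left (0:ℝ) (fhat a - β), hγ.le,
      mul_nonneg hγ.le (le_max_left (0:ℝ) (fhat a - β))]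
  have hdenpos : ∀ β a, (0:ℝ) < 1 + γ * max 0 (fhat a - β) := fun β a =>
    lt_of_lt_of_le one_pos (hden β a)
  have hGnonneg : ∀ β a, 0 ≤ G β a := fun β a =>
    div_nonneg hτ0.le (hdenpos β a).le
  have hGle : ∀ β a, G β a ≤ τ := by
    intro β a
    rw [hG]
    calc τ / (1 + γ * max 0 (fhat a - β)) ≤ τ / 1 :=
          div_le_div_of_nonneg_left hτ0.le one_pos (hden β a)
      _ = τ := by ring
  have hmeas : ∀ β, Measurable (G β) := by
    intro β
    apply Measurable.div measurable_const
    exact ((measurable_const.max (hfhat.sub measurable_const)).const_mul γ).const_add 1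
  have hint : ∀ β, Integrable (G β) μ := by
    intro β
    refine Integrable.mono' (integrable_const τ) (hmeas β).aestronglyMeasurable ?_
    filter_upwards with a
    rw [Real.norm_eq_abs, abs_of_nonneg (hGnonneg β a)]
    exact hGle β a
  set F : ℝ → ℝ := fun β => ∫ a, G β a ∂μ with hF
  -- continuity of F
  have hcont : Continuous F := by
    refine MeasureTheory.continuous_of_dominated
      (fun β => (hmeas β).aestronglyMeasurable)
      (fun β => Filter.Eventually.of_forall fun a => ?_) (integrable_const τ) ?_
    · rw [Real.norm_eq_abs, abs_of_nonneg (hGnonneg β a)]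
      exact hGle β a
    · filter_upwards with a
      apply Continuous.div continuous_const
      · fun_prop
      · intro β; exact (hdenpos β a).ne'
  have hβ₀le : β₀ ≤ 1 := by
    rw [hβ₀, div_le_iff₀ hγ]
    nlinarith
  -- F 1 = τ
  have hF1 : F 1 = τ := by
    have : ∀ a, G 1 a = τ := by
      intro a
      have h1 : max 0 (fhat a - 1) = 0 := by
        have := (hfhat01 a).2
        simp [max_eq_left, sub_nonpos.mpr this]
      rw [hG]; simp [h1]
    simp only [hF, this]
    simp [integral_const]
  -- F β₀ ≤ 1
  have hFβ₀ : F β₀ ≤ 1 := by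
    have hpt : ∀ a, G β₀ a ≤ 1 := by
      intro a
      rw [hG, div_le_one (hdenpos β₀ a)]
      have h1 : fhat a - β₀ ≤ max 0 (fhat a - β₀) := le_max_right _ _
      have h2 : γ * (fhat a - β₀) ≤ γ * max 0 (fhat a - β₀) :=
        mul_le_mul_of_nonneg_left h1 hγ.le
      have h3 : γ * β₀ = 1 - τ := by
        rw [hβ₀]; field_simp
      have h4 : 0 ≤ fhat a := (hfhat01 a).1
      nlinarith
    calc F β₀ ≤ ∫ _, (1:ℝ) ∂μ :=
          integral_mono (hint β₀) (integrable_const 1) hpt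
      _ = 1 := by simp
  have hmem : (1:ℝ) ∈ Set.Icc (F β₀) (F 1) := ⟨hFβ₀, hF1 ▸ hτ⟩
  have := intermediate_value_Icc hβ₀le hcont.continuousOn hmem
  obtain ⟨β, hβmem, hβ⟩ := this
  exact ⟨β, hβmem, hβ⟩
end
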